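/- Let n ≥ 3. Let so(n) denote the space of real skew-symmetric n×n matrices, let E_1,…,E_n be the standard basis vectors of ℝⁿ, let 𝔇 ⊂ so(n) be the span of the matrices E_i∧E_n := E_iE_nᵀ − E_nE_iᵀ for i = 1,…,n−1, and let so(n−1) ⊂ so(n) denote the subspace of skew-symmetric matrices whose last row and last column are zero. Then for every g in the special orthogonal group SO(n), the subspace sum 𝔇 + g⁻¹·so(n−1)·g equals so(n) if and only if the entry g_{nn} is nonzero. -/

import Mathlib

open Matrix

/-- `u ∧ v := u vᵀ − v uᵀ`. -/
def wedge {n : ℕ} (u v : Fin n → ℝ) : Matrix (Fin n) (Fin n) ℝ :=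
  vecMulVec u v - vecMulVec v u

/-- The space `so(n)` of real skew-symmetric `n × n` matrices. -/
def soAll (n : ℕ) : Submodule ℝ (Matrix (Fin n) (Fin n) ℝ) where
  carrier := {X | Xᵀ = -X}
  add_mem' := fun {a b} ha hb => by
    have ha' : aᵀ = -a := ha
    have hb' : bᵀ = -b := hb
    show (a + b)ᵀ = -(a + b)
    rw [transpose_add, ha', hb', neg_add]
  zero_mem' := by simp
  smul_mem' := fun c a ha => by
    have ha' : aᵀ = -a := ha
    show (c • a)ᵀ = -(c • a)
    rw [transpose_smul, ha', smul_neg]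

/-- The copy of `so(n−1)` inside the `n × n` matrices: skew-symmetric matrices whose
row and column indexed by `ℓ` (the last index) vanish. -/
def soSubAt (n : ℕ) (ℓ : Fin n) : Submodule ℝ (Matrix (Fin n) (Fin n) ℝ) where
  carrier := {X | Xᵀ = -X ∧ (∀ j, X ℓ j = 0) ∧ (∀ i, X i ℓ = 0)}
  add_mem' := fun {a b} ha hb =>
    ⟨by rw [transpose_add, ha.1, hb.1, neg_add],
     fun j => by simp [Matrix.add_apply, ha.2.1 j, hb.2.1 j],
     fun i => by simp [Matrix.add_apply, ha.2.2 i, hb.2.2 i]⟩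
  zero_mem' := ⟨by simp, fun j => rfl, fun i => rfl⟩
  smul_mem' := fun c a ha =>
    ⟨by rw [transpose_smul, ha.1, smul_neg],
     fun j => by simp [Matrix.smul_apply, ha.2.1 j],
     fun i => by simp [Matrix.smul_apply, ha.2.2 i]⟩

/-- The distribution `𝔇 = span{E_i ∧ E_ℓ : i ≠ ℓ}` (with `ℓ` the last index). -/
def DDAt (n : ℕ) (ℓ : Fin n) : Submodule ℝ (Matrix (Fin n) (Fin n) ℝ) :=
  Submodule.span ℝ
    {X | ∃ i : Fin n, i ≠ ℓ ∧ X = wedge (Pi.single i 1) (Pi.single ℓ 1)}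

/-- Conjugation `X ↦ g⁻¹ X g` as a linear map on matrices. -/
noncomputable def conjMap (n : ℕ) (g : Matrix (Fin n) (Fin n) ℝ) :
    Matrix (Fin n) (Fin n) ℝ →ₗ[ℝ] Matrix (Fin n) (Fin n) ℝ where
  toFun X := g⁻¹ * X * g
  map_add' X Y := by rw [mul_add, add_mul]
  map_smul' c X := by simp [Matrix.mul_smul, Matrix.smul_mul]



/-!
Conjugating by `g` turns the question into one about `g 𝔇 g⁻¹ + so(n-1)`, and
`g (a ∧ E_n) g⁻¹ = (g a) ∧ c` with `c = g E_n`, so `g 𝔇 g⁻¹ = {b ∧ c}`. Modulo `so(n-1)` a skew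
matrix is determined by its last column, and the last column of `b ∧ c` is `c_n b - b_n c`.
If `c_n = g_{nn} ≠ 0` these columns exhaust the vectors with vanishing last entry; if `c_n = 0`
they only fill the line `ℝ c`, which is too small once `n ≥ 3`.
-/

namespace Suslov

variable {n : ℕ}

lemma wedge_apply (u v : Fin n → ℝ) (i j : Fin n) :
    wedge u v i j = u i * v j - v i * u j := rfl

lemma wedge_self (v : Fin n → ℝ) : wedge v v = 0 := by
  ext i j
  rw [wedge_apply, mul_comm, sub_self, Matrix.zero_apply]

lemma wedge_mem_soAll (u v : Fin n → ℝ) : wedge u v ∈ soAll n := by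
  show (wedge u v)ᵀ = -wedge u v
  ext i j
  rw [transpose_apply, neg_apply, wedge_apply, wedge_apply]
  ring

lemma mul_mul_transpose_mem_soAll (A : Matrix (Fin n) (Fin n) ℝ) {X : Matrix (Fin n) (Fin n) ℝ}
    (hX : X ∈ soAll n) : A * X * Aᵀ ∈ soAll n := by
  have hX' : Xᵀ = -X := hX
  show (A * X * Aᵀ)ᵀ = -(A * X * Aᵀ)
  rw [transpose_mul, transpose_mul, transpose_transpose, hX', Matrix.neg_mul, Matrix.mul_neg,
    Matrix.mul_assoc]

lemma mul_wedge_mul_transpose (A : Matrix (Fin n) (Fin n) ℝ) (u v : Fin n → ℝ) :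
    A * wedge u v * Aᵀ = wedge (A *ᵥ u) (A *ᵥ v) := by
  simp only [wedge, Matrix.mul_sub, Matrix.sub_mul, mul_vecMulVec, vecMulVec_mul,
    vecMul_transpose]

def wedgeRight (c : Fin n → ℝ) : (Fin n → ℝ) →ₗ[ℝ] Matrix (Fin n) (Fin n) ℝ where
  toFun b := wedge b c
  map_add' _ _ := by ext; simp only [wedge_apply, Pi.add_apply, Matrix.add_apply]; ring
  map_smul' _ _ := by
    ext; simp only [wedge_apply, Pi.smul_apply, Matrix.smul_apply, smul_eq_mul,
      RingHom.id_apply]; ring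

lemma wedgeRight_apply (b c : Fin n → ℝ) : wedgeRight c b = wedge b c := rfl

lemma DDAt_eq_range_wedgeRight (ℓ : Fin n) :
    DDAt n ℓ = LinearMap.range (wedgeRight (Pi.single ℓ 1)) := by
  refine le_antisymm (Submodule.span_le.mpr ?_) ?_
  · rintro _ ⟨i, -, rfl⟩
    exact ⟨_, rfl⟩
  · rintro _ ⟨a, rfl⟩
    rw [pi_eq_sum_univ' a, map_sum]
    refine Submodule.sum_mem _ fun i _ => ?_
    rw [map_smul]
    refine Submodule.smul_mem _ _ ?_
    by_cases hi : i = ℓ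
    · rw [hi, wedgeRight_apply, wedge_self]
      exact Submodule.zero_mem _
    · exact Submodule.subset_span ⟨i, hi, rfl⟩

variable {ℓ : Fin n} {c : Fin n → ℝ}

lemma range_wedgeRight_sup_soSubAt_le_soAll :
    LinearMap.range (wedgeRight c) ⊔ soSubAt n ℓ ≤ soAll n := by
  refine sup_le ?_ fun X hX => hX.1
  rintro _ ⟨b, rfl⟩
  exact wedge_mem_soAll b c

lemma soAll_le_range_wedgeRight_sup_soSubAt (hc : c ℓ ≠ 0) :
    soAll n ≤ LinearMap.range (wedgeRight c) ⊔ soSubAt n ℓ := by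
  intro Z (hZ : Zᵀ = -Z)
  have hZ_apply (i j : Fin n) : Z j i = -Z i j := by
    simpa using congrFun (congrFun hZ i) j
  set b : Fin n → ℝ := fun i => (c ℓ)⁻¹ * Z i ℓ
  have hbℓ : b ℓ = 0 := by
    have := hZ_apply ℓ ℓ
    simp only [b, mul_eq_zero]
    right; linarith
  have hY_col (i : Fin n) : (Z - wedge b c) i ℓ = 0 := by
    rw [Matrix.sub_apply, wedge_apply, hbℓ, mul_zero, sub_zero, mul_right_comm,
      inv_mul_cancel₀ hc, one_mul, sub_self]
  have hY : Z - wedge b c ∈ soSubAt n ℓ := by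
    have hYskew : (Z - wedge b c)ᵀ = -(Z - wedge b c) :=
      (soAll n).sub_mem hZ (wedge_mem_soAll b c)
    refine ⟨hYskew, fun j => ?_, hY_col⟩
    simpa [hY_col j] using congrFun (congrFun hYskew j) ℓ
  rw [← add_sub_cancel (wedge b c) Z]
  exact Submodule.add_mem_sup ⟨b, rfl⟩ hY

lemma exists_apply_eq_smul_of_mem_range_wedgeRight_sup_soSubAt (hc : c ℓ = 0)
    {X : Matrix (Fin n) (Fin n) ℝ} (hX : X ∈ LinearMap.range (wedgeRight c) ⊔ soSubAt n ℓ) :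
    ∃ t : ℝ, ∀ i, X i ℓ = t * c i := by
  obtain ⟨_, ⟨b, rfl⟩, Y, hY, rfl⟩ := Submodule.mem_sup.mp hX
  refine ⟨-b ℓ, fun i => ?_⟩
  rw [Matrix.add_apply, wedgeRight_apply, wedge_apply, hc, hY.2.2 i]
  ring

/-- The last columns `E_i`, `E_j` of `E_i ∧ E_ℓ`, `E_j ∧ E_ℓ` cannot both lie on the line `ℝ c`. -/
lemma not_soAll_le_range_wedgeRight_sup_soSubAt (hn : 3 ≤ n) (hc : c ℓ = 0) :
    ¬ soAll n ≤ LinearMap.range (wedgeRight c) ⊔ soSubAt n ℓ := by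
  intro hle
  have h_single (i : Fin n) (hi : i ≠ ℓ) :
      ∃ t : ℝ, ∀ j, (Pi.single i 1 : Fin n → ℝ) j = t * c j := by
    obtain ⟨t, ht⟩ := exists_apply_eq_smul_of_mem_range_wedgeRight_sup_soSubAt hc
      (hle (wedge_mem_soAll (Pi.single i 1) (Pi.single ℓ 1)))
    exact ⟨t, fun j => by simpa [wedge_apply, Pi.single_apply, hi] using ht j⟩
  obtain ⟨i, hi, -⟩ := Fin.exists_ne_and_ne_of_two_lt ℓ ℓ hn
  obtain ⟨j, hj, hji⟩ := Fin.exists_ne_and_ne_of_two_lt ℓ i hn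
  obtain ⟨s, hs⟩ := h_single i hi
  obtain ⟨t, ht⟩ := h_single j hj
  have hsi := hs i
  have hsj := hs j
  have hti := ht i
  have htj := ht j
  simp only [Pi.single_eq_same, Pi.single_eq_of_ne hji, Pi.single_eq_of_ne hji.symm]
    at hsi hsj hti htj
  exact one_ne_zero (by linear_combination hsi + s * c i * htj - t * c i * hsj : (1 : ℝ) = 0)

lemma range_wedgeRight_sup_soSubAt_eq_soAll_iff (hn : 3 ≤ n) :
    LinearMap.range (wedgeRight c) ⊔ soSubAt n ℓ = soAll n ↔ c ℓ ≠ 0 := by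
  refine ⟨fun h hc => not_soAll_le_range_wedgeRight_sup_soSubAt hn hc h.ge, fun hc => ?_⟩
  exact le_antisymm range_wedgeRight_sup_soSubAt_le_soAll
    (soAll_le_range_wedgeRight_sup_soSubAt hc)

section Conjugation

variable {g : Matrix (Fin n) (Fin n) ℝ}

lemma conjMap_apply_of_transpose_mul_self (hg : gᵀ * g = 1) (X : Matrix (Fin n) (Fin n) ℝ) :
    conjMap n g X = gᵀ * X * g := by
  rw [← Matrix.inv_eq_left_inv hg]
  rfl

lemma conjMap_mul_mul_transpose (hg : gᵀ * g = 1) (X : Matrix (Fin n) (Fin n) ℝ) :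
    conjMap n g (g * X * gᵀ) = X := by
  rw [conjMap_apply_of_transpose_mul_self hg, ← Matrix.mul_assoc, ← Matrix.mul_assoc, hg,
    Matrix.one_mul, Matrix.mul_assoc, hg, Matrix.mul_one]

lemma conjMap_injective (hg : gᵀ * g = 1) : Function.Injective (conjMap n g) := by
  have hgg : g * gᵀ = 1 := mul_eq_one_comm.mp hg
  refine Function.LeftInverse.injective (g := fun Y => g * Y * gᵀ) fun X => ?_
  simp only [conjMap_apply_of_transpose_mul_self hg, ← Matrix.mul_assoc, hgg, Matrix.one_mul]
  rw [Matrix.mul_assoc, hgg, Matrix.mul_one]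

lemma map_conjMap_soAll (hg : gᵀ * g = 1) : (soAll n).map (conjMap n g) = soAll n := by
  refine le_antisymm (Submodule.map_le_iff_le_comap.mpr fun X hX => ?_) fun X hX => ?_
  · simpa only [Submodule.mem_comap, conjMap_apply_of_transpose_mul_self hg,
      transpose_transpose] using mul_mul_transpose_mem_soAll gᵀ hX
  · exact ⟨g * X * gᵀ, mul_mul_transpose_mem_soAll g hX, conjMap_mul_mul_transpose hg X⟩

lemma map_conjMap_range_wedgeRight (hg : gᵀ * g = 1) (c : Fin n → ℝ) :
    (LinearMap.range (wedgeRight c)).map (conjMap n g) =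
      LinearMap.range (wedgeRight (gᵀ *ᵥ c)) := by
  have hcomp : conjMap n g ∘ₗ wedgeRight c = wedgeRight (gᵀ *ᵥ c) ∘ₗ mulVecLin gᵀ := by
    refine LinearMap.ext fun b => ?_
    simpa only [LinearMap.comp_apply, conjMap_apply_of_transpose_mul_self hg, wedgeRight_apply,
      mulVecLin_apply, transpose_transpose] using mul_wedge_mul_transpose gᵀ b c
  rw [← LinearMap.range_comp, hcomp, LinearMap.range_comp_of_range_eq_top]
  exact LinearMap.range_eq_top.mpr fun v =>
    ⟨g *ᵥ v, by rw [mulVecLin_apply, mulVec_mulVec, hg, one_mulVec]⟩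

end Conjugation

end Suslov

open Suslov in
theorem suslov_connection_iff (n : ℕ) (hn : 3 ≤ n)
    (g : Matrix (Fin n) (Fin n) ℝ) (hg : gᵀ * g = 1) :
    DDAt n ⟨n - 1, by omega⟩ ⊔
        (soSubAt n ⟨n - 1, by omega⟩).map (conjMap n g) = soAll n ↔
      g ⟨n - 1, by omega⟩ ⟨n - 1, by omega⟩ ≠ 0 := by
  set ℓ : Fin n := ⟨n - 1, by omega⟩
  have hDD :
      DDAt n ℓ = (LinearMap.range (wedgeRight (g *ᵥ Pi.single ℓ 1))).map (conjMap n g) := by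
    rw [map_conjMap_range_wedgeRight hg, mulVec_mulVec, hg, one_mulVec, DDAt_eq_range_wedgeRight]
  rw [hDD, ← Submodule.map_sup, ← map_conjMap_soAll hg,
    (Submodule.map_injective_of_injective (conjMap_injective hg)).eq_iff,
    range_wedgeRight_sup_soSubAt_eq_soAll_iff hn, mulVec_single_one, col_apply]
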